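/- Fix b ∈ ℝ and define the hyperbolic catenoid X : ℝ² → M₂(ℂ) by X(u,v) = [[e^{2u+bv}, e^{(b+2i)v}],[e^{(b−2i)v}, e^{−2u+bv}]]. Then: (i) X(u,v) is Hermitian with det X(u,v) = 0 and tr X(u,v) > 0 for all (u,v), so X maps into ℚ³₊; (ii) X is conformal: ⟨X_u, X_u⟩ = ⟨X_v, X_v⟩ = 4e^{2bv} > 0 and ⟨X_u, X_v⟩ = 0; (iii) X is invariant under the hyperbolic rotations R^H(t) = diag(e^{t}, e^{−t}): X(u+t, v) = R^H(t)·X(u,v)·R^H(t)⋆ for all t; and (iv) X has zero mean curvature: there exists a smooth map n : ℝ² → Herm(2,ℂ) with ⟨n,n⟩ = ⟨n, X_u⟩ = ⟨n, X_v⟩ = 0, ⟨n, X⟩ = 1, and ⟨X_u, n_u⟩ + ⟨X_v, n_v⟩ = 0 at every point. -/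
import Mathlib


open Matrix
open scoped ComplexOrder

/-- The Lorentz inner product on 2×2 complex matrices, via determinant polarization. -/
noncomputable def ip (V W : Matrix (Fin 2) (Fin 2) ℂ) : ℂ :=
  -(1 / 2) * ((V + W).det - V.det - W.det)

/-- The hyperbolic catenoid. -/
noncomputable def XH (b : ℝ) (u v : ℝ) : Matrix (Fin 2) (Fin 2) ℂ :=
  !![Complex.exp (2 * u + (b : ℂ) * v), Complex.exp (((b : ℂ) + 2 * Complex.I) * v);
     Complex.exp (((b : ℂ) - 2 * Complex.I) * v), Complex.exp (-(2 * u) + (b : ℂ) * v)]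

/-- Its partial derivative in u. -/
noncomputable def XHu (b : ℝ) (u v : ℝ) : Matrix (Fin 2) (Fin 2) ℂ :=
  !![2 * Complex.exp (2 * u + (b : ℂ) * v), 0;
     0, -(2 * Complex.exp (-(2 * u) + (b : ℂ) * v))]

/-- Its partial derivative in v. -/
noncomputable def XHv (b : ℝ) (u v : ℝ) : Matrix (Fin 2) (Fin 2) ℂ :=
  !![(b : ℂ) * Complex.exp (2 * u + (b : ℂ) * v),
     ((b : ℂ) + 2 * Complex.I) * Complex.exp (((b : ℂ) + 2 * Complex.I) * v);
     ((b : ℂ) - 2 * Complex.I) * Complex.exp (((b : ℂ) - 2 * Complex.I) * v),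
     (b : ℂ) * Complex.exp (-(2 * u) + (b : ℂ) * v)]

/-- The hyperbolic rotation R^H(t) = diag(e^{t}, e^{-t}). -/
noncomputable def RH (t : ℝ) : Matrix (Fin 2) (Fin 2) ℂ :=
  !![(Real.exp t : ℂ), 0; 0, (Real.exp (-t) : ℂ)]

/-! ### Auxiliary lemmas -/

lemma ip_apply (V W : Matrix (Fin 2) (Fin 2) ℂ) :
    ip V W = -(1/2) * (V 0 0 * W 1 1 + V 1 1 * W 0 0 - V 0 1 * W 1 0 - V 1 0 * W 0 1) := by
  simp [ip, Matrix.det_fin_two, Matrix.add_apply]; ring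

lemma exp_mul_exp (x y z : ℂ) (h : x + y = z) :
    Complex.exp x * Complex.exp y = Complex.exp z := by rw [← Complex.exp_add, h]

lemma hasDerivAt_cexp_affine (c a d : ℂ) (x : ℝ) :
    HasDerivAt (fun t : ℝ => c * Complex.exp (a * t + d)) (c * a * Complex.exp (a * x + d)) x := by
  have h1 : HasDerivAt (fun z : ℂ => a * z + d) a (x : ℂ) := by
    simpa using ((hasDerivAt_id (x:ℂ)).const_mul a).add_const d
  have h2 : HasDerivAt (fun z : ℂ => Complex.exp (a * z + d))
      (Complex.exp (a * x + d) * a) (x : ℂ) :=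
    (Complex.hasDerivAt_exp _).comp _ h1
  have h3 := h2.comp_ofReal
  simpa [mul_comm, mul_assoc, mul_left_comm] using h3.const_mul c

lemma hasDerivAt_cexp' (f : ℝ → ℂ) (c a d D : ℂ) (x : ℝ)
    (hf : ∀ t : ℝ, f t = c * Complex.exp (a * t + d))
    (hD : D = c * a * Complex.exp (a * x + d)) :
    HasDerivAt f D x := by
  rw [hD]
  exact (hasDerivAt_cexp_affine c a d x).congr_of_eventuallyEq
    (Filter.Eventually.of_forall hf)

lemma smooth_entry (c a d : ℂ) :
    ContDiff ℝ (⊤ : ℕ∞) (fun p : ℝ × ℝ => c * Complex.exp (a * p.1 + d * p.2)) := by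
  have h1 : ContDiff ℝ (⊤ : ℕ∞) (fun p : ℝ × ℝ => a * (p.1 : ℂ) + d * (p.2 : ℂ)) := by
    apply ContDiff.add
    · exact contDiff_const.mul (Complex.ofRealCLM.contDiff.comp contDiff_fst)
    · exact contDiff_const.mul (Complex.ofRealCLM.contDiff.comp contDiff_snd)
  exact contDiff_const.mul (((Complex.contDiff_exp (𝕜 := ℂ)).restrict_scalars ℝ).comp h1)

/-- The Gauss map of the hyperbolic catenoid. -/
noncomputable def nH (b : ℝ) (u v : ℝ) : Matrix (Fin 2) (Fin 2) ℂ :=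
  !![(-((4+(b:ℂ)^2)/8)) * Complex.exp (2*u - (b:ℂ)*v),
     ((4-(b:ℂ)^2)/8 - Complex.I*((b:ℂ)/2)) * Complex.exp ((2*Complex.I - (b:ℂ))*v);
     ((4-(b:ℂ)^2)/8 + Complex.I*((b:ℂ)/2)) * Complex.exp ((-(2*Complex.I) - (b:ℂ))*v),
     (-((4+(b:ℂ)^2)/8)) * Complex.exp (-(2*u) - (b:ℂ)*v)]

/-- Its partial derivative in u. -/
noncomputable def nHu (b : ℝ) (u v : ℝ) : Matrix (Fin 2) (Fin 2) ℂ :=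
  !![(-((4+(b:ℂ)^2)/4)) * Complex.exp (2*u - (b:ℂ)*v), 0;
     0, ((4+(b:ℂ)^2)/4) * Complex.exp (-(2*u) - (b:ℂ)*v)]

/-- Its partial derivative in v. -/
noncomputable def nHv (b : ℝ) (u v : ℝ) : Matrix (Fin 2) (Fin 2) ℂ :=
  !![((b:ℂ)*(4+(b:ℂ)^2)/8) * Complex.exp (2*u - (b:ℂ)*v),
     (2*Complex.I - (b:ℂ)) * ((4-(b:ℂ)^2)/8 - Complex.I*((b:ℂ)/2)) * Complex.exp ((2*Complex.I - (b:ℂ))*v);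
     (-(2*Complex.I) - (b:ℂ)) * ((4-(b:ℂ)^2)/8 + Complex.I*((b:ℂ)/2)) * Complex.exp ((-(2*Complex.I) - (b:ℂ))*v),
     ((b:ℂ)*(4+(b:ℂ)^2)/8) * Complex.exp (-(2*u) - (b:ℂ)*v)]

set_option linter.unnecessarySeqFocus false in
set_option linter.unusedTactic false in
theorem hyperbolic_catenoid (b : ℝ) :
    -- (o) XHu, XHv are indeed the partial derivatives of XH
    (∀ u v : ℝ, ∀ i j : Fin 2,
      HasDerivAt (fun u' => XH b u' v i j) (XHu b u v i j) u ∧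
      HasDerivAt (fun v' => XH b u v' i j) (XHv b u v i j) v) ∧
    -- (i) X maps into the light cone ℚ³₊
    (∀ u v : ℝ, (XH b u v).IsHermitian ∧ (XH b u v).det = 0 ∧ 0 < (XH b u v).trace) ∧
    -- (ii) conformality
    (∀ u v : ℝ,
      ip (XHu b u v) (XHu b u v) = ((4 * Real.exp (2 * b * v) : ℝ) : ℂ) ∧
      ip (XHv b u v) (XHv b u v) = ((4 * Real.exp (2 * b * v) : ℝ) : ℂ) ∧
      (0 : ℝ) < 4 * Real.exp (2 * b * v) ∧
      ip (XHu b u v) (XHv b u v) = 0) ∧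
    -- (iii) rotational invariance
    (∀ u v t : ℝ, XH b (u + t) v = RH t * XH b u v * (RH t)ᴴ) ∧
    -- (iv) zero mean curvature via the Gauss map
    (∃ n nu nv : ℝ → ℝ → Matrix (Fin 2) (Fin 2) ℂ,
      (∀ i j : Fin 2, ContDiff ℝ (⊤ : ℕ∞) (fun p : ℝ × ℝ => n p.1 p.2 i j)) ∧
      (∀ u v : ℝ, ∀ i j : Fin 2,
        HasDerivAt (fun u' => n u' v i j) (nu u v i j) u ∧
        HasDerivAt (fun v' => n u v' i j) (nv u v i j) v) ∧
      (∀ u v : ℝ,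
        (n u v).IsHermitian ∧
        ip (n u v) (n u v) = 0 ∧ ip (n u v) (XHu b u v) = 0 ∧
        ip (n u v) (XHv b u v) = 0 ∧ ip (n u v) (XH b u v) = 1 ∧
        ip (XHu b u v) (nu u v) + ip (XHv b u v) (nv u v) = 0)) := by
  refine ⟨?_, ?_, ?_, ?_, ?_⟩
  · -- (o)
    intro u v i j
    fin_cases i <;> fin_cases j <;>
      simp only [XH, XHu, XHv, Fin.zero_eta, Fin.mk_one, Matrix.of_apply, Matrix.cons_val',
        Matrix.cons_val_zero, Matrix.cons_val_one,
        Matrix.head_cons, Matrix.head_fin_const, Matrix.empty_val', Matrix.cons_val_fin_one] <;>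
      constructor
    · exact hasDerivAt_cexp' _ 1 2 ((b:ℂ)*v) _ u (fun t => by ring_nf) (by ring_nf)
    · exact hasDerivAt_cexp' _ 1 (b:ℂ) (2*(u:ℂ)) _ v (fun t => by ring_nf) (by ring_nf)
    · exact hasDerivAt_const u _
    · exact hasDerivAt_cexp' _ 1 ((b:ℂ)+2*Complex.I) 0 _ v (fun t => by ring_nf) (by ring_nf)
    · exact hasDerivAt_const u _
    · exact hasDerivAt_cexp' _ 1 ((b:ℂ)-2*Complex.I) 0 _ v (fun t => by ring_nf) (by ring_nf)
    · exact hasDerivAt_cexp' _ 1 (-2) ((b:ℂ)*v) _ u (fun t => by ring_nf) (by ring_nf)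
    · exact hasDerivAt_cexp' _ 1 (b:ℂ) (-(2*(u:ℂ))) _ v (fun t => by ring_nf) (by ring_nf)
  · -- (i)
    intro u v
    refine ⟨?_, ?_, ?_⟩
    · ext i j
      fin_cases i <;> fin_cases j <;>
        simp [XH, Matrix.conjTranspose_apply, ← Complex.exp_conj, map_add, _root_.map_mul,
          map_sub, map_ofNat, Complex.conj_ofReal, Complex.conj_I] <;> ring_nf
    · rw [Matrix.det_fin_two]
      simp only [XH, Matrix.of_apply, Matrix.cons_val', Matrix.cons_val_zero, Matrix.cons_val_one,
        Matrix.head_cons, Matrix.head_fin_const, Matrix.empty_val', Matrix.cons_val_fin_one]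
      rw [exp_mul_exp _ _ (2*(b:ℂ)*v) (by ring), exp_mul_exp _ _ (2*(b:ℂ)*v) (by ring)]
      ring
    · rw [Matrix.trace_fin_two]
      simp only [XH, Matrix.of_apply, Matrix.cons_val', Matrix.cons_val_zero, Matrix.cons_val_one,
        Matrix.head_cons, Matrix.head_fin_const, Matrix.empty_val', Matrix.cons_val_fin_one]
      have h1 : (2 * (u:ℂ) + (b:ℂ) * v) = ((2*u + b*v : ℝ) : ℂ) := by push_cast; ring
      have h2 : (-(2 * (u:ℂ)) + (b:ℂ) * v) = ((-(2*u) + b*v : ℝ) : ℂ) := by push_cast; ring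
      rw [h1, h2, ← Complex.ofReal_exp, ← Complex.ofReal_exp, ← Complex.ofReal_add]
      rw [Complex.zero_lt_real]
      positivity
  · -- (ii)
    intro u v
    have hA : Complex.exp (2 * (u:ℂ) + (b:ℂ) * v) * Complex.exp (-(2 * (u:ℂ)) + (b:ℂ) * v)
        = ((Real.exp (2*b*v) : ℝ) : ℂ) := by
      rw [Complex.ofReal_exp, exp_mul_exp _ _ (((2*b*v : ℝ)):ℂ) (by push_cast; ring)]
    have hF : Complex.exp (((b:ℂ) + 2 * Complex.I) * v) * Complex.exp (((b:ℂ) - 2 * Complex.I) * v)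
        = ((Real.exp (2*b*v) : ℝ) : ℂ) := by
      rw [Complex.ofReal_exp, exp_mul_exp _ _ (((2*b*v : ℝ)):ℂ) (by push_cast; ring)]
    have hI := Complex.I_mul_I
    refine ⟨?_, ?_, by positivity, ?_⟩ <;>
      simp only [ip_apply, XHu, XHv, Matrix.of_apply, Matrix.cons_val', Matrix.cons_val_zero,
          Matrix.cons_val_one, Matrix.head_cons, Matrix.head_fin_const, Matrix.empty_val',
          Matrix.cons_val_fin_one, Complex.ofReal_mul, Complex.ofReal_ofNat]
    · linear_combination (4:ℂ) * hA
    · linear_combination (-(b:ℂ)^2) * hA + ((b:ℂ)^2+4) * hF +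
        (-4 * Complex.exp (((b:ℂ)+2*Complex.I)*v) * Complex.exp (((b:ℂ)-2*Complex.I)*v)) * hI
    · ring
  · -- (iii)
    intro u v t
    ext i j
    fin_cases i <;> fin_cases j <;>
      simp [XH, RH, Matrix.mul_apply, Fin.sum_univ_two, Matrix.conjTranspose_apply,
        Complex.conj_ofReal, Complex.ofReal_exp, ← Complex.exp_conj, map_neg] <;>
      (rw [← Complex.exp_add, ← Complex.exp_add]; congr 1; push_cast; ring)
  · -- (iv)
    refine ⟨nH b, nHu b, nHv b, ?_, ?_, ?_⟩
    · intro i j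
      fin_cases i <;> fin_cases j <;>
        simp only [nH, Fin.zero_eta, Fin.mk_one, Matrix.of_apply, Matrix.cons_val',
          Matrix.cons_val_zero, Matrix.cons_val_one, Matrix.head_cons, Matrix.head_fin_const,
          Matrix.empty_val', Matrix.cons_val_fin_one]
      · have h : (fun p : ℝ × ℝ => (-((4+(b:ℂ)^2)/8)) * Complex.exp (2*p.1 - (b:ℂ)*p.2))
            = fun p : ℝ × ℝ => (-((4+(b:ℂ)^2)/8)) * Complex.exp (2*p.1 + (-(b:ℂ))*p.2) := by
          funext p; ring_nf
        rw [h]; exact smooth_entry _ _ _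
      · have h : (fun p : ℝ × ℝ => ((4-(b:ℂ)^2)/8 - Complex.I*((b:ℂ)/2)) * Complex.exp ((2*Complex.I - (b:ℂ))*p.2))
            = fun p : ℝ × ℝ => ((4-(b:ℂ)^2)/8 - Complex.I*((b:ℂ)/2)) * Complex.exp (0*p.1 + (2*Complex.I - (b:ℂ))*p.2) := by
          funext p; ring_nf
        rw [h]; exact smooth_entry _ _ _
      · have h : (fun p : ℝ × ℝ => ((4-(b:ℂ)^2)/8 + Complex.I*((b:ℂ)/2)) * Complex.exp ((-(2*Complex.I) - (b:ℂ))*p.2))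
            = fun p : ℝ × ℝ => ((4-(b:ℂ)^2)/8 + Complex.I*((b:ℂ)/2)) * Complex.exp (0*p.1 + (-(2*Complex.I) - (b:ℂ))*p.2) := by
          funext p; ring_nf
        rw [h]; exact smooth_entry _ _ _
      · have h : (fun p : ℝ × ℝ => (-((4+(b:ℂ)^2)/8)) * Complex.exp (-(2*p.1) - (b:ℂ)*p.2))
            = fun p : ℝ × ℝ => (-((4+(b:ℂ)^2)/8)) * Complex.exp ((-2)*p.1 + (-(b:ℂ))*p.2) := by
          funext p; ring_nf
        rw [h]; exact smooth_entry _ _ _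
    · intro u v i j
      fin_cases i <;> fin_cases j <;>
        simp only [nH, nHu, nHv, Fin.zero_eta, Fin.mk_one, Matrix.of_apply, Matrix.cons_val',
          Matrix.cons_val_zero, Matrix.cons_val_one, Matrix.head_cons, Matrix.head_fin_const,
          Matrix.empty_val', Matrix.cons_val_fin_one] <;>
        constructor
      · exact hasDerivAt_cexp' _ (-((4+(b:ℂ)^2)/8)) 2 (-((b:ℂ)*v)) _ u (fun t => by ring_nf) (by ring_nf)
      · exact hasDerivAt_cexp' _ (-((4+(b:ℂ)^2)/8)) (-(b:ℂ)) (2*(u:ℂ)) _ v (fun t => by ring_nf) (by ring_nf)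
      · exact hasDerivAt_const u _
      · exact hasDerivAt_cexp' _ ((4-(b:ℂ)^2)/8 - Complex.I*((b:ℂ)/2)) (2*Complex.I - (b:ℂ)) 0 _ v (fun t => by ring_nf) (by ring_nf)
      · exact hasDerivAt_const u _
      · exact hasDerivAt_cexp' _ ((4-(b:ℂ)^2)/8 + Complex.I*((b:ℂ)/2)) (-(2*Complex.I) - (b:ℂ)) 0 _ v (fun t => by ring_nf) (by ring_nf)
      · exact hasDerivAt_cexp' _ (-((4+(b:ℂ)^2)/8)) (-2) (-((b:ℂ)*v)) _ u (fun t => by ring_nf) (by ring_nf)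
      · exact hasDerivAt_cexp' _ (-((4+(b:ℂ)^2)/8)) (-(b:ℂ)) (-(2*(u:ℂ))) _ v (fun t => by ring_nf) (by ring_nf)
    · intro u v
      have hAQ : Complex.exp (2*(u:ℂ) + (b:ℂ)*v) * Complex.exp (-(2*(u:ℂ)) - (b:ℂ)*v) = 1 := by
        rw [exp_mul_exp _ _ 0 (by ring), Complex.exp_zero]
      have hDP : Complex.exp (-(2*(u:ℂ)) + (b:ℂ)*v) * Complex.exp (2*(u:ℂ) - (b:ℂ)*v) = 1 := by
        rw [exp_mul_exp _ _ 0 (by ring), Complex.exp_zero]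
      have hFS : Complex.exp (((b:ℂ) + 2*Complex.I)*v) * Complex.exp ((-(2*Complex.I) - (b:ℂ))*v) = 1 := by
        rw [exp_mul_exp _ _ 0 (by ring), Complex.exp_zero]
      have hGR : Complex.exp (((b:ℂ) - 2*Complex.I)*v) * Complex.exp ((2*Complex.I - (b:ℂ))*v) = 1 := by
        rw [exp_mul_exp _ _ 0 (by ring), Complex.exp_zero]
      have hPQ : Complex.exp (2*(u:ℂ) - (b:ℂ)*v) * Complex.exp (-(2*(u:ℂ)) - (b:ℂ)*v)
          = Complex.exp (-(2*(b:ℂ)*v)) := exp_mul_exp _ _ _ (by ring)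
      have hRS : Complex.exp ((2*Complex.I - (b:ℂ))*v) * Complex.exp ((-(2*Complex.I) - (b:ℂ))*v)
          = Complex.exp (-(2*(b:ℂ)*v)) := exp_mul_exp _ _ _ (by ring)
      have hI := Complex.I_mul_I
      refine ⟨?_, ?_, ?_, ?_, ?_, ?_⟩
      · ext i j
        fin_cases i <;> fin_cases j <;>
          simp [nH, Matrix.conjTranspose_apply, ← Complex.exp_conj, map_add, _root_.map_mul,
            map_sub, map_ofNat, map_neg, map_div₀, map_pow, Complex.conj_ofReal, Complex.conj_I] <;>
          ring_nf
      all_goals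
        simp only [ip_apply, nH, nHu, nHv, XH, XHu, XHv, Matrix.of_apply, Matrix.cons_val',
          Matrix.cons_val_zero, Matrix.cons_val_one, Matrix.head_cons, Matrix.head_fin_const,
          Matrix.empty_val', Matrix.cons_val_fin_one]
      · linear_combination (-(-((4+(b:ℂ)^2)/8))^2) * hPQ
          + (((4-(b:ℂ)^2)/8 - Complex.I*((b:ℂ)/2)) * ((4-(b:ℂ)^2)/8 + Complex.I*((b:ℂ)/2))) * hRS
          + (-((b:ℂ)^2/4) * Complex.exp (-(2*(b:ℂ)*v))) * hI
      · linear_combination (-((4+(b:ℂ)^2)/8)) * hDP - (-((4+(b:ℂ)^2)/8)) * hAQ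
      · linear_combination (-(1/2:ℂ)*(b:ℂ)*(-((4+(b:ℂ)^2)/8))) * hDP
          + (-(1/2:ℂ)*(b:ℂ)*(-((4+(b:ℂ)^2)/8))) * hAQ
          + ((1/2:ℂ)*((4-(b:ℂ)^2)/8 - Complex.I*((b:ℂ)/2))*((b:ℂ)-2*Complex.I)) * hGR
          + ((1/2:ℂ)*((4-(b:ℂ)^2)/8 + Complex.I*((b:ℂ)/2))*((b:ℂ)+2*Complex.I)) * hFS
          + (b:ℂ) * hI
      · linear_combination (-(1/2:ℂ)*(-((4+(b:ℂ)^2)/8))) * hDP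
          + (-(1/2:ℂ)*(-((4+(b:ℂ)^2)/8))) * hAQ
          + ((1/2:ℂ)*((4-(b:ℂ)^2)/8 - Complex.I*((b:ℂ)/2))) * hGR
          + ((1/2:ℂ)*((4-(b:ℂ)^2)/8 + Complex.I*((b:ℂ)/2))) * hFS
      · linear_combination ((2:ℂ)*(-((4+(b:ℂ)^2)/8)) + (1/2:ℂ)*(b:ℂ)^2*(-((4+(b:ℂ)^2)/8))) * (hAQ + hDP)
          - ((1/2:ℂ)*((b:ℂ)+2*Complex.I)^2*((4-(b:ℂ)^2)/8 + Complex.I*((b:ℂ)/2))) * hFS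
          - ((1/2:ℂ)*((b:ℂ)-2*Complex.I)^2*((4-(b:ℂ)^2)/8 - Complex.I*((b:ℂ)/2))) * hGR
          + (-2 - (3/2:ℂ)*(b:ℂ)^2) * hI
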